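/- Let r₁, r₂, r₃ > 0 be pairwise distinct and q₁, q₂, q₃ > 0, and let E(α₁, α₂) = q₂q₃/d₁(α₁) + q₃q₁/d₂(α₂) + q₁q₂/d₃(2π − α₁ − α₂) be the Coulomb energy of the orbitally constrained triple. Then the Hessian matrix of E at (α₁, α₂) = (0, 0) (the configuration with all three points on one ray) is negative definite; in particular, (0,0) is a nondegenerate local maximum of E for every choice of positive charges. -/

import Mathlib

/-- Distance between two points on concentric circles of radii `a`, `b` with central
angle `α` (cosine rule). -/
noncomputable def chordDist (a b α : ℝ) : ℝ :=
  Real.sqrt (a ^ 2 + b ^ 2 - 2 * a * b * Real.cos α)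

/-- Coulomb energy of three charges on concentric circles of radii `r₁, r₂, r₃`, as a
function of the central angles `(α₁, α₂)` (with `α₃ = 2π − α₁ − α₂`). -/
noncomputable def orbitalEnergy (q1 q2 q3 r1 r2 r3 : ℝ) (p : ℝ × ℝ) : ℝ :=
  q2 * q3 / chordDist r2 r3 p.1 + q3 * q1 / chordDist r3 r1 p.2 +
    q1 * q2 / chordDist r1 r2 (2 * Real.pi - p.1 - p.2)

/-!
Each pair term `qⱼqₖ / d` of the energy depends on a single affine combination of the angles
(`α₁`, `α₂` or `2π − α₁ − α₂`). On the ray all three combinations have cosine `1`, where every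
distance is minimal, so every term is maximal there and has second derivative
`−qⱼqₖrⱼrₖ / |rⱼ − rₖ|³ < 0`. The Hessian is thus `∑ κᵢ ℓᵢ(v)²` with all `κᵢ < 0`, and the linear
forms `ℓᵢ(v) ∈ {v₁, v₂, −v₁ − v₂}` cannot all vanish at `v ≠ 0`.
-/

open Real

section RidgeSum

variable {ι E : Type*} [NormedAddCommGroup E] [NormedSpace ℝ E]

theorem hasFDerivAt_fderiv_sum_comp_affine (s : Finset ι) {f f' : ι → ℝ → ℝ} {f'' : ι → ℝ}
    {σ : ι → E → ℝ} {L : ι → E →L[ℝ] ℝ} {x : E}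
    (hf : ∀ i t, HasDerivAt (f i) (f' i t) t) (hσ : ∀ i y, HasFDerivAt (σ i) (L i) y)
    (hf' : ∀ i, HasDerivAt (f' i) (f'' i) (σ i x)) :
    HasFDerivAt (fderiv ℝ fun y => ∑ i ∈ s, f i (σ i y))
      (∑ i ∈ s, (f'' i • L i).smulRight (L i)) x := by
  have hD : fderiv ℝ (fun y => ∑ i ∈ s, f i (σ i y)) = fun y => ∑ i ∈ s, f' i (σ i y) • L i :=
    funext fun y =>
      (HasFDerivAt.fun_sum fun i _ => (hf i (σ i y)).comp_hasFDerivAt y (hσ i y)).fderiv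
  rw [hD]
  exact HasFDerivAt.fun_sum fun i _ => ((hf' i).comp_hasFDerivAt x (hσ i x)).smul_const (L i)

end RidgeSum

section ChordDist

variable {a b : ℝ}

theorem sq_add_sq_sub_two_mul_mul_cos_pos (hab : 0 ≤ a * b) (hne : a ≠ b) (α : ℝ) :
    0 < a ^ 2 + b ^ 2 - 2 * a * b * cos α := by
  have : 0 < (a - b) ^ 2 := by have := sub_ne_zero.2 hne; positivity
  nlinarith [mul_nonneg hab (sub_nonneg.2 (cos_le_one α))]

theorem chordDist_pos (hab : 0 ≤ a * b) (hne : a ≠ b) (α : ℝ) : 0 < chordDist a b α :=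
  sqrt_pos.2 (sq_add_sq_sub_two_mul_mul_cos_pos hab hne α)

theorem chordDist_le_of_cos_eq_one (hab : 0 ≤ a * b) {β : ℝ} (hβ : cos β = 1) (α : ℝ) :
    chordDist a b β ≤ chordDist a b α := by
  refine sqrt_le_sqrt ?_
  rw [hβ]
  nlinarith [mul_nonneg hab (sub_nonneg.2 (cos_le_one α))]

theorem hasDerivAt_chordDist (hab : 0 ≤ a * b) (hne : a ≠ b) (α : ℝ) :
    HasDerivAt (chordDist a b) (a * b * sin α / chordDist a b α) α := by
  have hpos := sq_add_sq_sub_two_mul_mul_cos_pos hab hne α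
  refine (((hasDerivAt_cos α).const_mul (2 * a * b)).const_sub (a ^ 2 + b ^ 2)).sqrt
    hpos.ne' |>.congr_deriv ?_
  unfold chordDist
  field_simp

theorem hasDerivAt_div_chordDist (c : ℝ) (hab : 0 ≤ a * b) (hne : a ≠ b) (α : ℝ) :
    HasDerivAt (fun t => c / chordDist a b t)
      (-(c * a * b * sin α) / chordDist a b α ^ 3) α := by
  have hd := chordDist_pos hab hne α
  refine (hasDerivAt_const α c).div (hasDerivAt_chordDist hab hne α) hd.ne' |>.congr_deriv ?_
  field_simp
  ring

theorem hasDerivAt_sin_div_chordDist_pow_three (c : ℝ) (hab : 0 ≤ a * b) (hne : a ≠ b)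
    {α : ℝ} (hα : cos α = 1) :
    HasDerivAt (fun t => -(c * a * b * sin t) / chordDist a b t ^ 3)
      (-(c * a * b) / chordDist a b α ^ 3) α := by
  have hd := chordDist_pos hab hne α
  have hsin : sin α = 0 := by nlinarith [sin_sq_add_cos_sq α, sq_nonneg (sin α)]
  refine ((hasDerivAt_sin α).const_mul (c * a * b)).neg.div
    ((hasDerivAt_chordDist hab hne α).pow 3) (pow_pos hd 3).ne' |>.congr_deriv ?_
  rw [Pi.pow_apply, hsin, hα]
  field_simp
  ring

end ChordDist

section CoulombSum

variable {ι : Type*} [Fintype ι] {c a b : ι → ℝ}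

theorem fderiv_fderiv_sum_div_chordDist_apply_self_neg {E : Type*} [NormedAddCommGroup E]
    [NormedSpace ℝ E] {σ : ι → E → ℝ} {L : ι → E →L[ℝ] ℝ} {x v : E}
    (hc : ∀ i, 0 < c i) (hab : ∀ i, 0 < a i * b i) (hne : ∀ i, a i ≠ b i)
    (hσ : ∀ i y, HasFDerivAt (σ i) (L i) y) (hx : ∀ i, cos (σ i x) = 1)
    (hv : ∃ i, L i v ≠ 0) :
    fderiv ℝ (fderiv ℝ fun y => ∑ i, c i / chordDist (a i) (b i) (σ i y)) x v v < 0 := by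
  rw [(hasFDerivAt_fderiv_sum_comp_affine Finset.univ
    (fun i => hasDerivAt_div_chordDist (c i) (hab i).le (hne i)) hσ
    (fun i => hasDerivAt_sin_div_chordDist_pow_three (c i) (hab i).le (hne i) (hx i))).fderiv]
  simp only [sum_apply, ContinuousLinearMap.smulRight_apply, smul_apply, smul_eq_mul]
  have hcurv : ∀ i, -(c i * a i * b i) / chordDist (a i) (b i) (σ i x) ^ 3 < 0 := fun i => by
    refine div_neg_of_neg_of_pos ?_ (pow_pos (chordDist_pos (hab i).le (hne i) _) 3)
    nlinarith [mul_pos (hc i) (hab i)]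
  obtain ⟨j, hj⟩ := hv
  refine Finset.sum_neg' (fun i _ => ?_) ⟨j, Finset.mem_univ j, ?_⟩ <;> rw [mul_assoc]
  exacts [mul_nonpos_of_nonpos_of_nonneg (hcurv i).le (mul_self_nonneg _),
    mul_neg_of_neg_of_pos (hcurv j) (mul_self_pos.2 hj)]

theorem sum_div_chordDist_le_of_cos_eq_one {X : Type*} {σ : ι → X → ℝ} {x : X}
    (hc : ∀ i, 0 ≤ c i) (hab : ∀ i, 0 ≤ a i * b i) (hne : ∀ i, a i ≠ b i)
    (hx : ∀ i, cos (σ i x) = 1) (y : X) :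
    ∑ i, c i / chordDist (a i) (b i) (σ i y) ≤ ∑ i, c i / chordDist (a i) (b i) (σ i x) :=
  Finset.sum_le_sum fun i _ => div_le_div_of_nonneg_left (hc i)
    (chordDist_pos (hab i) (hne i) _) (chordDist_le_of_cos_eq_one (hab i) (hx i) _)

end CoulombSum

/-- The Hessian of the orbital Coulomb energy at `(α₁, α₂) = (0, 0)` (all
three points on one ray) is negative definite, and `(0,0)` is a local maximum, for every
choice of positive charges. -/
theorem orbital_hessian_neg_def_at_ray
    (r1 r2 r3 q1 q2 q3 : ℝ)
    (hr1 : 0 < r1) (hr2 : 0 < r2) (hr3 : 0 < r3)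
    (h12 : r1 ≠ r2) (h23 : r2 ≠ r3) (h31 : r3 ≠ r1)
    (hq1 : 0 < q1) (hq2 : 0 < q2) (hq3 : 0 < q3) :
    (∀ v : ℝ × ℝ, v ≠ 0 →
      fderiv ℝ (fderiv ℝ (orbitalEnergy q1 q2 q3 r1 r2 r3)) ((0 : ℝ), (0 : ℝ)) v v < 0) ∧
    IsLocalMax (orbitalEnergy q1 q2 q3 r1 r2 r3) ((0 : ℝ), (0 : ℝ)) := by
  set c : Fin 3 → ℝ := ![q2 * q3, q3 * q1, q1 * q2]
  set a : Fin 3 → ℝ := ![r2, r3, r1]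
  set b : Fin 3 → ℝ := ![r3, r1, r2]
  set σ : Fin 3 → ℝ × ℝ → ℝ := ![Prod.fst, Prod.snd, fun p => 2 * π - p.1 - p.2]
  set L : Fin 3 → ℝ × ℝ →L[ℝ] ℝ :=
    ![.fst ℝ ℝ ℝ, .snd ℝ ℝ ℝ, 0 - .fst ℝ ℝ ℝ - .snd ℝ ℝ ℝ]
  have hE : orbitalEnergy q1 q2 q3 r1 r2 r3 =
      fun p => ∑ i, c i / chordDist (a i) (b i) (σ i p) := by
    funext p
    simp [orbitalEnergy, Fin.sum_univ_three, c, a, b, σ]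
  have hc : ∀ i, 0 < c i := by intro i; fin_cases i <;> simp [c] <;> positivity
  have hab : ∀ i, 0 < a i * b i := by intro i; fin_cases i <;> simp [a, b] <;> positivity
  have hne : ∀ i, a i ≠ b i := by intro i; fin_cases i <;> simp [a, b, *, Ne.symm]
  have hσ : ∀ i y, HasFDerivAt (σ i) (L i) y := by
    intro i y
    fin_cases i
    exacts [hasFDerivAt_fst, hasFDerivAt_snd,
      ((hasFDerivAt_const _ y).sub hasFDerivAt_fst).sub hasFDerivAt_snd]
  have hx : ∀ i, cos (σ i (0, 0)) = 1 := by intro i; fin_cases i <;> simp [σ]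
  refine ⟨fun v hv => ?_, ?_⟩
  · rw [hE]
    refine fderiv_fderiv_sum_div_chordDist_apply_self_neg hc hab hne hσ hx ?_
    by_contra! h
    exact hv (Prod.ext (h 0) (h 1))
  · rw [hE]
    exact .of_forall (sum_div_chordDist_le_of_cos_eq_one (fun i => (hc i).le)
      (fun i => (hab i).le) hne hx)
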